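/- The single-target reduction preserves validity for node targets: given a graph G and a node shape s with constraint φ and finite target set {n_1, ..., n_m} ⊆ N, extend G to G' by adding a fresh node n_0 and fresh edges e_1, ..., e_m with ρ(e_j) = (n_0, n_j), each labelled with a fresh label l_j, and replace s's target with ⊥ while adding a shape s_0 with constraint ≥_1 l_1.φ ∧ ... ∧ ≥_1 l_m.φ targeting exactly n_0. Then G conforms to {s} if and only if G' conforms to {s with target ⊥, s_0}, provided φ does not mention the fresh labels or the fresh node. -/

import Mathlib

/-- A property graph (restricted to the components relevant for path semantics):
edges have a source node, a destination node, and a set of labels. -/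
structure PGraph (Node Edge Lab : Type*) where
  src : Edge → Node
  dst : Edge → Node
  eLab : Edge → Set Lab

/-- ProGS path expressions: p ::= l_E | p⁻ | p₁/p₂ | p₁ || p₂ | p* | p+ | ?p -/
inductive PathExpr (Lab : Type*) where
  | lbl (l : Lab)
  | inv (p : PathExpr Lab)
  | seq (p₁ p₂ : PathExpr Lab)
  | alt (p₁ p₂ : PathExpr Lab)
  | star (p : PathExpr Lab)
  | plus (p : PathExpr Lab)
  | opt (p : PathExpr Lab)

/-- Path semantics: `PathSem G p n n'` means `n' ∈ ⟦p⟧^G_n`.  The clauses for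
`p+` (and hence `p*`) realize the least-fixed-point reading of the recursive
definition ⟦p+⟧_n = ⟦p⟧_n ∪ ⟦p/p+⟧_n (and ∅ if ⟦p⟧_n = ∅). -/
inductive PathSem {Node Edge Lab : Type*} (G : PGraph Node Edge Lab) :
    PathExpr Lab → Node → Node → Prop where
  | lbl {l : Lab} {e : Edge} {n n' : Node} :
      G.src e = n → G.dst e = n' → l ∈ G.eLab e → PathSem G (.lbl l) n n'
  | inv {p n n'} : PathSem G p n' n → PathSem G (.inv p) n n'
  | seq {p₁ p₂ n m n'} :
      PathSem G p₁ n m → PathSem G p₂ m n' → PathSem G (.seq p₁ p₂) n n'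
  | altL {p₁ p₂ n n'} : PathSem G p₁ n n' → PathSem G (.alt p₁ p₂) n n'
  | altR {p₁ p₂ n n'} : PathSem G p₂ n n' → PathSem G (.alt p₁ p₂) n n'
  | plusOne {p n n'} : PathSem G p n n' → PathSem G (.plus p) n n'
  | plusStep {p n m n'} :
      PathSem G p n m → PathSem G (.plus p) m n' → PathSem G (.plus p) n n'
  | starRefl {p n} : PathSem G (.star p) n n
  | starPlus {p n n'} : PathSem G (.plus p) n n' → PathSem G (.star p) n n'
  | optRefl {p n} : PathSem G (.opt p) n n
  | optOne {p n n'} : PathSem G p n n' → PathSem G (.opt p) n n'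

open Classical

/-- Node constraints with qualified number restrictions over paths:
φ_N ::= ⊤ | s_N | n | l_N | ¬φ | φ₁ ∧ φ₂ | ≥_i p.φ. -/
inductive NCq (SN Lab Node : Type*) where
  | top
  | shape (s : SN)
  | nid (n : Node)
  | lab (l : Lab)
  | neg (φ : NCq SN Lab Node)
  | and (φ₁ φ₂ : NCq SN Lab Node)
  | geq (i : ℕ) (p : PathExpr Lab) (φ : NCq SN Lab Node)

/-- Three-valued evaluation (values 0, 1/2, 1) of node constraints:
⟦≥_i p.φ⟧_n is 1 if at least i nodes reachable via p satisfy φ with value 1,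
0 if |⟦p⟧_n| − |{n₂ ∈ ⟦p⟧_n : ⟦φ⟧_{n₂} = 0}| < i, and 1/2 otherwise. -/
noncomputable def evalN {SN Lab Node Edge : Type*} (G : PGraph Node Edge Lab)
    (nlab : Node → Set Lab) (A : SN → Node → ℚ) :
    NCq SN Lab Node → Node → ℚ
  | .top, _ => 1
  | .shape s, n => A s n
  | .nid n', n => if n' = n then 1 else 0
  | .lab l, n => if l ∈ nlab n then 1 else 0
  | .neg φ, n => 1 - evalN G nlab A φ n
  | .and φ₁ φ₂, n => min (evalN G nlab A φ₁ n) (evalN G nlab A φ₂ n)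
  | .geq i p φ, n =>
      if i ≤ {n₂ | PathSem G p n n₂ ∧ evalN G nlab A φ n₂ = 1}.ncard then 1
      else if {n₂ | PathSem G p n n₂}.ncard -
          {n₂ | PathSem G p n n₂ ∧ evalN G nlab A φ n₂ = 0}.ncard < i then 0
      else 1/2

/-- Relabelling of path expressions. -/
def mapPath {Lab Lab' : Type*} (fl : Lab → Lab') : PathExpr Lab → PathExpr Lab'
  | .lbl l => .lbl (fl l)
  | .inv p => .inv (mapPath fl p)
  | .seq p₁ p₂ => .seq (mapPath fl p₁) (mapPath fl p₂)
  | .alt p₁ p₂ => .alt (mapPath fl p₁) (mapPath fl p₂)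
  | .star p => .star (mapPath fl p)
  | .plus p => .plus (mapPath fl p)
  | .opt p => .opt (mapPath fl p)

/-- Renaming of shape names, node identities and labels in a node constraint.
A constraint in the image of `mapNCq` mentions no fresh labels and no fresh
node identities. -/
def mapNCq {SN SN' Lab Lab' Node Node' : Type*} (fs : SN → SN') (fn : Node → Node')
    (fl : Lab → Lab') : NCq SN Lab Node → NCq SN' Lab' Node'
  | .top => .top
  | .shape s => .shape (fs s)
  | .nid n => .nid (fn n)
  | .lab l => .lab (fl l)
  | .neg φ => .neg (mapNCq fs fn fl φ)
  | .and φ₁ φ₂ => .and (mapNCq fs fn fl φ₁) (mapNCq fs fn fl φ₂)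
  | .geq i p φ => .geq i (mapPath fl p) (mapNCq fs fn fl φ)

/-- The extended graph G' of the single-target reduction: a fresh node `none`
and, for each of the m targets t j, a fresh edge (inr j) from `none` to
`some (t j)` carrying only the fresh label (inr j); original nodes, edges and
labels are embedded via `some` and `inl`. -/
def extGraph {Node Edge Lab : Type*} (G : PGraph Node Edge Lab) {m : ℕ}
    (t : Fin m → Node) : PGraph (Option Node) (Edge ⊕ Fin m) (Lab ⊕ Fin m) where
  src := Sum.elim (fun e => some (G.src e)) (fun _ => none)
  dst := Sum.elim (fun e => some (G.dst e)) (fun j => some (t j))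
  eLab := Sum.elim (fun e => Sum.inl '' G.eLab e) (fun j => {Sum.inr j})

/-- The fresh node `none` carries no labels; original node labels are embedded. -/
def extNlab {Node Lab : Type*} (nlab : Node → Set Lab) (m : ℕ) :
    Option Node → Set (Lab ⊕ Fin m)
  | none => ∅
  | some n => Sum.inl '' nlab n

/-- The constraint φ transported to the extended graph (shape name s becomes
`false`, s₀ is `true`); it mentions neither the fresh node nor fresh labels. -/
def extCon {Node Lab : Type*} (φ : NCq Unit Lab Node) (m : ℕ) :
    NCq Bool (Lab ⊕ Fin m) (Option Node) :=
  mapNCq (fun _ => false) some Sum.inl φ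

/-- The constraint of the fresh shape s₀: ≥₁ l₁.φ ∧ … ∧ ≥₁ l_m.φ. -/
def s0Con {Node Lab : Type*} (φ : NCq Unit Lab Node) (m : ℕ) :
    NCq Bool (Lab ⊕ Fin m) (Option Node) :=
  (List.ofFn fun j : Fin m =>
    NCq.geq 1 (PathExpr.lbl (Sum.inr j)) (extCon φ m)).foldr NCq.and NCq.top

/-- The shape system of the reduced problem: shape `false` is the original
shape s, now with target ⊥ (hence no target condition), and shape `true` is
s₀, targeting exactly the fresh node `none`. -/
def extShapes {Node Lab : Type*} (φ : NCq Unit Lab Node) (m : ℕ) :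
    Bool → NCq Bool (Lab ⊕ Fin m) (Option Node) :=
  fun b => if b then s0Con φ m else extCon φ m

/-! Assignments are transported along `some`. Paths over original labels from `some n` stay
in the image of `some` and come from paths of `G`, while those from the fresh node `none` never
leave it; so the transported constraint evaluates at `some n` as `φ` does at `n`, and `s₀` is `1`
at `none` iff `φ` is `1` at every target. What remains is a value of `s` at `none` that is a
fixed point of `φ` evaluated there. Every set reachable from `none` is finite, so this evaluation
is monotone in the information order (`1/2` below `0` and `1`): either `1/2` is a fixed point, or
the value computed from `1/2` is definite and hence a fixed point. -/

theorem Option.Rel.comp {α β γ : Type*} {r : α → β → Prop} {s : β → γ → Prop}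
    {u : α → γ → Prop} (hu : ∀ {a b c}, r a b → s b c → u a c) {x : Option α} {y : Option β}
    {z : Option γ} (h₁ : Option.Rel r x y) (h₂ : Option.Rel s y z) : Option.Rel u x z := by
  cases h₁ <;> cases h₂ <;> constructor; exact hu ‹_› ‹_›

theorem Option.Rel.mono {α β : Type*} {r s : α → β → Prop} (hrs : ∀ {a b}, r a b → s a b)
    {x : Option α} {y : Option β} (h : Option.Rel r x y) : Option.Rel s x y := by
  cases h <;> constructor; exact hrs ‹_›

theorem Option.Rel.refl {α : Type*} {r : α → α → Prop} (hr : ∀ a, r a a) (x : Option α) :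
    Option.Rel r x x := by
  cases x <;> constructor; exact hr _

section Paths

variable {Node Edge Lab : Type*} {G : PGraph Node Edge Lab} {m : ℕ} {t : Fin m → Node}

theorem PathSem.extGraph_mapPath {p : PathExpr Lab} {n n' : Node} (h : PathSem G p n n') :
    PathSem (extGraph G t) (mapPath Sum.inl p) (some n) (some n') := by
  induction h with
  | @lbl _ e _ _ hs hd hl =>
    exact .lbl (e := Sum.inl e) (congrArg some hs) (congrArg some hd) (Set.mem_image_of_mem _ hl)
  | inv _ ih => exact .inv ih
  | seq _ _ ih₁ ih₂ => exact .seq ih₁ ih₂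
  | altL _ ih => exact .altL ih
  | altR _ ih => exact .altR ih
  | plusOne _ ih => exact .plusOne ih
  | plusStep _ _ ih₁ ih₂ => exact .plusStep ih₁ ih₂
  | starRefl => exact .starRefl
  | starPlus _ ih => exact .starPlus ih
  | optRefl => exact .optRefl
  | optOne _ ih => exact .optOne ih

theorem PathSem.optionRel_of_extGraph {p : PathExpr Lab} {x y : Option Node}
    (h : PathSem (extGraph G t) (mapPath Sum.inl p) x y) : Option.Rel (PathSem G p) x y := by
  generalize hq : mapPath Sum.inl p = q at h
  induction h generalizing p with
  | @lbl _ e _ _ hs hd hl =>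
    cases p <;> cases hq
    rcases e with e | j
    · obtain ⟨l, hl, ⟨⟩⟩ := hl
      exact hs ▸ hd ▸ .some (.lbl rfl rfl hl)
    · cases hl
  | inv _ ih =>
    cases p <;> cases hq
    cases ih rfl <;> constructor; exact .inv ‹_›
  | seq _ _ ih₁ ih₂ =>
    cases p <;> cases hq
    exact (ih₁ rfl).comp .seq (ih₂ rfl)
  | altL _ ih =>
    cases p <;> cases hq
    exact (ih rfl).mono .altL
  | altR _ ih =>
    cases p <;> cases hq
    exact (ih rfl).mono .altR
  | plusOne _ ih =>
    cases p <;> cases hq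
    exact (ih rfl).mono .plusOne
  | plusStep _ _ ih₁ ih₂ =>
    cases p <;> cases hq
    exact (ih₁ rfl).comp .plusStep (ih₂ (p := .plus _) rfl)
  | starRefl =>
    cases p <;> cases hq
    exact .refl (fun _ => .starRefl) _
  | starPlus _ ih =>
    cases p <;> cases hq
    exact (ih (p := .plus _) rfl).mono .starPlus
  | optRefl =>
    cases p <;> cases hq
    exact .refl (fun _ => .optRefl) _
  | optOne _ ih =>
    cases p <;> cases hq
    exact (ih rfl).mono .optOne

theorem setOf_pathSem_extGraph_some (p : PathExpr Lab) (n : Node) (P : Option Node → Prop) :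
    {y | PathSem (extGraph G t) (mapPath Sum.inl p) (some n) y ∧ P y}
      = some '' {n' | PathSem G p n n' ∧ P (some n')} := by
  ext y
  constructor
  · rintro ⟨hp, hP⟩
    obtain ⟨hn'⟩ | _ := hp.optionRel_of_extGraph
    exact ⟨_, ⟨hn', hP⟩, rfl⟩
  · rintro ⟨n', ⟨hn', hP⟩, rfl⟩
    exact ⟨hn'.extGraph_mapPath, hP⟩

theorem PathSem.eq_none_of_extGraph {p : PathExpr Lab} {y : Option Node}
    (h : PathSem (extGraph G t) (mapPath Sum.inl p) none y) : y = none := by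
  cases h.optionRel_of_extGraph
  rfl

theorem pathSem_extGraph_inr_iff {j : Fin m} {x y : Option Node} :
    PathSem (extGraph G t) (.lbl (Sum.inr j)) x y ↔ x = none ∧ y = some (t j) := by
  constructor
  · rintro (@⟨_, (e | j'), _, _, rfl, rfl, hl⟩)
    · obtain ⟨_, _, ⟨⟩⟩ := hl
    · cases hl
      exact ⟨rfl, rfl⟩
  · rintro ⟨rfl, rfl⟩
    exact .lbl (e := Sum.inr j) rfl rfl rfl

end Paths

section Eval

variable {SN Node Edge Lab : Type*} {G : PGraph Node Edge Lab} {nlab : Node → Set Lab}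

theorem eq_zero_or_eq_half_or_eq_one {x : ℚ} (h : x ∈ ({0, 1/2, 1} : Set ℚ)) :
    x = 0 ∨ x = 1/2 ∨ x = 1 := by
  simpa using h

-- `a = 1/2 ∨ a = b` says that `a` lies below `b` in the information order.
theorem min_eq_half_or_eq {a b c d : ℚ} (hab : a = 1/2 ∨ a = b) (hcd : c = 1/2 ∨ c = d)
    (hb : b ∈ ({0, 1/2, 1} : Set ℚ)) (hd : d ∈ ({0, 1/2, 1} : Set ℚ)) :
    min a c = 1/2 ∨ min a c = min b d := by
  rcases hab with rfl | rfl <;> rcases hcd with rfl | rfl <;>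
    rcases eq_zero_or_eq_half_or_eq_one hb with rfl | rfl | rfl <;>
    rcases eq_zero_or_eq_half_or_eq_one hd with rfl | rfl | rfl <;> norm_num

theorem evalN_mem {A : SN → Node → ℚ} (hA : ∀ s n, A s n ∈ ({0, 1/2, 1} : Set ℚ))
    (ψ : NCq SN Lab Node) (n : Node) : evalN G nlab A ψ n ∈ ({0, 1/2, 1} : Set ℚ) := by
  induction ψ generalizing n with
  | top => simp [evalN]
  | shape s => exact hA s n
  | nid | lab | geq => unfold evalN; split_ifs <;> simp
  | neg ψ ih =>
    rcases eq_zero_or_eq_half_or_eq_one (ih n) with h | h | h <;> simp only [evalN, h] <;> norm_num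
  | and ψ₁ ψ₂ ih₁ ih₂ =>
    rcases min_choice (evalN G nlab A ψ₁ n) (evalN G nlab A ψ₂ n) with h | h <;>
      rw [evalN, h]
    exacts [ih₁ n, ih₂ n]

theorem evalN_le_one {A : SN → Node → ℚ} (hA : ∀ s n, A s n ∈ ({0, 1/2, 1} : Set ℚ))
    (ψ : NCq SN Lab Node) (n : Node) : evalN G nlab A ψ n ≤ 1 := by
  rcases eq_zero_or_eq_half_or_eq_one (evalN_mem (G := G) (nlab := nlab) hA ψ n) with h | h | h <;>
    rw [h] <;> norm_num

theorem evalN_geq_congr {A₁ A₂ : SN → Node → ℚ} {i : ℕ} {p : PathExpr Lab}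
    {ψ : NCq SN Lab Node} {n : Node}
    (h : ∀ n', PathSem G p n n' → evalN G nlab A₁ ψ n' = evalN G nlab A₂ ψ n') :
    evalN G nlab A₁ (.geq i p ψ) n = evalN G nlab A₂ (.geq i p ψ) n := by
  have hsets : ∀ r : ℚ, {n' | PathSem G p n n' ∧ evalN G nlab A₁ ψ n' = r}
      = {n' | PathSem G p n n' ∧ evalN G nlab A₂ ψ n' = r} :=
    fun r => Set.ext fun n' => and_congr_right fun hp => by rw [h n' hp]
  simp only [evalN, hsets]

theorem evalN_geq_eq_half_or_eq {A₁ A₂ : SN → Node → ℚ} {i : ℕ} {p : PathExpr Lab}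
    {ψ : NCq SN Lab Node} {n : Node} (hfin : {n' | PathSem G p n n'}.Finite)
    (hhalf : ∀ n', PathSem G p n n' → evalN G nlab A₁ ψ n' = 1/2) :
    evalN G nlab A₁ (.geq i p ψ) n = 1/2 ∨
      evalN G nlab A₁ (.geq i p ψ) n = evalN G nlab A₂ (.geq i p ψ) n := by
  have hnone : ∀ r : ℚ, r ≠ 1/2 → {n' | PathSem G p n n' ∧ evalN G nlab A₁ ψ n' = r} = ∅ :=
    fun r hr => Set.eq_empty_of_forall_notMem fun n' ⟨hp, he⟩ => hr (he ▸ hhalf n' hp)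
  have hones : {n' | PathSem G p n n' ∧ evalN G nlab A₂ ψ n' = 1}.ncard
      ≤ {n' | PathSem G p n n'}.ncard :=
    Set.ncard_le_ncard (fun _ hn' => hn'.1) hfin
  simp only [evalN, hnone 1 (by norm_num), hnone 0 (by norm_num), Set.ncard_empty]
  by_cases hi : i = 0
  · simp [hi]
  by_cases hR : {n' | PathSem G p n n'}.ncard < i
  · right
    rw [if_neg (by omega), if_pos (by omega), if_neg (by omega), if_pos (by omega)]
  · left
    rw [if_neg (by omega), if_neg (by omega)]

theorem evalN_geq_one_of_unique {A : SN → Node → ℚ} {p : PathExpr Lab}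
    {ψ : NCq SN Lab Node} {n n₀ : Node} (hp : ∀ n', PathSem G p n n' ↔ n' = n₀)
    (hψ : evalN G nlab A ψ n₀ ∈ ({0, 1/2, 1} : Set ℚ)) :
    evalN G nlab A (.geq 1 p ψ) n = evalN G nlab A ψ n₀ := by
  have hR : {n' | PathSem G p n n'} = {n₀} := Set.ext hp
  have hsets : ∀ r : ℚ, {n' | PathSem G p n n' ∧ evalN G nlab A ψ n' = r}
      = if evalN G nlab A ψ n₀ = r then {n₀} else ∅ := by
    intro r
    split_ifs with hr
    · refine Set.ext fun n' => ?_
      simp only [Set.mem_ofPred_eq, hp, Set.mem_singleton_iff, and_iff_left_iff_imp]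
      rintro rfl
      exact hr
    · exact Set.eq_empty_of_forall_notMem fun n' ⟨h, he⟩ => hr ((hp n').1 h ▸ he)
  rcases eq_zero_or_eq_half_or_eq_one hψ with h | h | h <;> simp [evalN, hR, hsets, h]

theorem evalN_foldr_and_eq_one_iff {A : SN → Node → ℚ}
    (hA : ∀ s n, A s n ∈ ({0, 1/2, 1} : Set ℚ)) (l : List (NCq SN Lab Node)) (n : Node) :
    evalN G nlab A (l.foldr .and .top) n = 1 ↔ ∀ ψ ∈ l, evalN G nlab A ψ n = 1 := by
  induction l with
  | nil => simp [evalN]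
  | cons ψ l ih =>
    rw [List.foldr_cons, evalN, List.forall_mem_cons, ← ih]
    have h₁ := evalN_le_one (G := G) (nlab := nlab) hA ψ n
    have h₂ := evalN_le_one (G := G) (nlab := nlab) hA (l.foldr .and .top) n
    constructor
    · intro h
      exact ⟨le_antisymm h₁ (h ▸ min_le_left _ _), le_antisymm h₂ (h ▸ min_le_right _ _)⟩
    · rintro ⟨h₁, h₂⟩
      rw [h₁, h₂, min_self]

theorem evalN_foldr_and_congr {A₁ A₂ : SN → Node → ℚ} {l : List (NCq SN Lab Node)} {n : Node}
    (h : ∀ ψ ∈ l, evalN G nlab A₁ ψ n = evalN G nlab A₂ ψ n) :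
    evalN G nlab A₁ (l.foldr .and .top) n = evalN G nlab A₂ (l.foldr .and .top) n := by
  induction l with
  | nil => rfl
  | cons ψ l ih =>
    rw [List.forall_mem_cons] at h
    simp only [List.foldr_cons, evalN, h.1, ih h.2]

theorem evalN_mapNCq_congr {SN' Node' Lab' : Type*} {A₁ A₂ : SN → Node → ℚ} (fs : SN' → SN)
    (fn : Node' → Node) (fl : Lab' → Lab) (h : ∀ s, A₁ (fs s) = A₂ (fs s))
    (ψ : NCq SN' Lab' Node') (n : Node) :
    evalN G nlab A₁ (mapNCq fs fn fl ψ) n = evalN G nlab A₂ (mapNCq fs fn fl ψ) n := by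
  induction ψ generalizing n with
  | shape s => exact congrFun (h s) n
  | neg ψ ih => simp only [mapNCq, evalN, ih]
  | and _ _ ih₁ ih₂ => simp only [mapNCq, evalN, ih₁, ih₂]
  | geq i p ψ ih => exact evalN_geq_congr fun n' _ => ih n'
  | _ => rfl

end Eval

section Extension

variable {SN SN' Node Edge Lab : Type*} {G : PGraph Node Edge Lab} {nlab : Node → Set Lab}
  {m : ℕ} {t : Fin m → Node}

theorem evalN_extGraph_mapNCq_some (A : SN' → Option Node → ℚ) (fs : SN → SN')
    (ψ : NCq SN Lab Node) (n : Node) :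
    evalN (extGraph G t) (extNlab nlab m) A (mapNCq fs some Sum.inl ψ) (some n)
      = evalN G nlab (fun s n => A (fs s) (some n)) ψ n := by
  induction ψ generalizing n with
  | top | shape => rfl
  | nid n' => simp [mapNCq, evalN]
  | lab l => simp [mapNCq, evalN, extNlab]
  | neg ψ ih => simp only [mapNCq, evalN, ih]
  | and _ _ ih₁ ih₂ => simp only [mapNCq, evalN, ih₁, ih₂]
  | geq i p ψ ih =>
    have hR := setOf_pathSem_extGraph_some (G := G) (t := t) p n (fun _ => True)
    simp only [and_true] at hR
    simp only [mapNCq, evalN, setOf_pathSem_extGraph_some, ih, hR,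
      Set.ncard_image_of_injective _ (Option.some_injective _)]

theorem evalN_extGraph_mapNCq_none_eq_half_or_eq {Node' : Type*}
    {nl : Option Node → Set (Lab ⊕ Fin m)} {A₁ A₂ : SN' → Option Node → ℚ}
    (h₁ : ∀ s, A₁ s none = 1/2) (h₂ : ∀ s x, A₂ s x ∈ ({0, 1/2, 1} : Set ℚ))
    (fs : SN → SN') (fn : Node' → Option Node) (ψ : NCq SN Lab Node') :
    evalN (extGraph G t) nl A₁ (mapNCq fs fn Sum.inl ψ) none = 1/2 ∨
      evalN (extGraph G t) nl A₁ (mapNCq fs fn Sum.inl ψ) none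
        = evalN (extGraph G t) nl A₂ (mapNCq fs fn Sum.inl ψ) none := by
  induction ψ with
  | shape s => exact .inl (h₁ (fs s))
  | neg ψ ih =>
    simp only [mapNCq, evalN]
    rcases ih with h | h <;> rw [h] <;> norm_num
  | and ψ₁ ψ₂ ih₁ ih₂ => exact min_eq_half_or_eq ih₁ ih₂ (evalN_mem h₂ _ _) (evalN_mem h₂ _ _)
  | geq i p ψ ih =>
    have hreach : {y | PathSem (extGraph G t) (mapPath Sum.inl p) none y} ⊆ {none} :=
      fun _ hy => hy.eq_none_of_extGraph
    rcases ih with h | h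
    · exact evalN_geq_eq_half_or_eq ((Set.finite_singleton none).subset hreach)
        fun y hy => (hreach hy : y = none) ▸ h
    · exact .inr (evalN_geq_congr fun y hy => (hreach hy : y = none) ▸ h)
  | _ => exact .inr rfl

theorem exists_extCon_fixpoint_at_none {a : Node → ℚ}
    (ha : ∀ n, a n ∈ ({0, 1/2, 1} : Set ℚ)) (φ : NCq Unit Lab Node) :
    ∃ d ∈ ({0, 1/2, 1} : Set ℚ),
      evalN (extGraph G t) (extNlab nlab m) (fun _ x => x.elim d a) (extCon φ m) none = d := by
  set f : ℚ → ℚ := fun d =>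
    evalN (extGraph G t) (extNlab nlab m) (fun _ x => x.elim d a) (extCon φ m) none
  have hmem : ∀ d ∈ ({0, 1/2, 1} : Set ℚ), ∀ x : Option Node,
      x.elim d a ∈ ({0, 1/2, 1} : Set ℚ) := by
    rintro d hd (_ | n)
    exacts [hd, ha n]
  by_cases hhalf : f (1/2) = 1/2
  · exact ⟨1/2, by simp, hhalf⟩
  · have hf : f (1/2) ∈ ({0, 1/2, 1} : Set ℚ) := evalN_mem (fun _ => hmem _ (by simp)) _ _
    exact ⟨f (1/2), hf, ((evalN_extGraph_mapNCq_none_eq_half_or_eq (fun _ => rfl)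
      (fun _ => hmem _ hf) _ _ φ).resolve_left hhalf).symm⟩

end Extension

section Reduction

variable {Node Edge Lab : Type*} {G : PGraph Node Edge Lab} {nlab : Node → Set Lab}
  {m : ℕ} {t : Fin m → Node}

theorem evalN_extCon_congr {E : Type*} {G' : PGraph (Option Node) E (Lab ⊕ Fin m)}
    {nl : Option Node → Set (Lab ⊕ Fin m)} {A₁ A₂ : Bool → Option Node → ℚ}
    (h : A₁ false = A₂ false) (φ : NCq Unit Lab Node) (x : Option Node) :
    evalN G' nl A₁ (extCon φ m) x = evalN G' nl A₂ (extCon φ m) x :=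
  evalN_mapNCq_congr _ _ _ (fun _ => h) φ x

theorem evalN_s0Con_congr {E : Type*} {G' : PGraph (Option Node) E (Lab ⊕ Fin m)}
    {nl : Option Node → Set (Lab ⊕ Fin m)} {A₁ A₂ : Bool → Option Node → ℚ}
    (h : A₁ false = A₂ false) (φ : NCq Unit Lab Node) (x : Option Node) :
    evalN G' nl A₁ (s0Con φ m) x = evalN G' nl A₂ (s0Con φ m) x := by
  refine evalN_foldr_and_congr fun ψ hψ => ?_
  obtain ⟨j, rfl⟩ := List.mem_ofFn.mp hψ
  exact evalN_geq_congr fun y _ => evalN_extCon_congr h φ y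

theorem evalN_s0Con_none_eq_one_iff {A : Bool → Option Node → ℚ}
    (hA : ∀ b x, A b x ∈ ({0, 1/2, 1} : Set ℚ)) (φ : NCq Unit Lab Node) :
    evalN (extGraph G t) (extNlab nlab m) A (s0Con φ m) none = 1 ↔
      ∀ j, evalN G nlab (fun _ n => A false (some n)) φ (t j) = 1 := by
  rw [s0Con, evalN_foldr_and_eq_one_iff hA, List.forall_mem_ofFn_iff]
  refine forall_congr' fun j => ?_
  rw [evalN_geq_one_of_unique (n₀ := some (t j)) (fun y => by simp [pathSem_extGraph_inr_iff])
    (evalN_mem hA _ _), extCon, evalN_extGraph_mapNCq_some]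

theorem exists_extCon_fixpoint {φ : NCq Unit Lab Node} {A : Unit → Node → ℚ}
    (hT : ∀ u n, A u n ∈ ({0, 1/2, 1} : Set ℚ)) (hfix : ∀ u n, A u n = evalN G nlab A φ n) :
    ∃ B : Option Node → ℚ, (∀ x, B x ∈ ({0, 1/2, 1} : Set ℚ)) ∧
      (∀ x, B x = evalN (extGraph G t) (extNlab nlab m) (fun _ => B) (extCon φ m) x) ∧
      ∀ n, B (some n) = A () n := by
  obtain ⟨d, hdT, hd⟩ := exists_extCon_fixpoint_at_none (G := G) (nlab := nlab) (t := t) (hT ()) φ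
  refine ⟨fun x => x.elim d (A ()), ?_, ?_, fun _ => rfl⟩
  · rintro (_ | n)
    exacts [hdT, hT () n]
  · rintro (_ | n)
    · exact hd.symm
    · rw [extCon, evalN_extGraph_mapNCq_some]
      exact hfix () n

theorem exists_extShapes_fixpoint {B : Option Node → ℚ} {φ : NCq Unit Lab Node}
    (hT : ∀ x, B x ∈ ({0, 1/2, 1} : Set ℚ))
    (hfix : ∀ x, B x = evalN (extGraph G t) (extNlab nlab m) (fun _ => B) (extCon φ m) x) :
    ∃ A' : Bool → Option Node → ℚ, A' false = B ∧ (∀ b x, A' b x ∈ ({0, 1/2, 1} : Set ℚ)) ∧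
      ∀ b x, A' b x = evalN (extGraph G t) (extNlab nlab m) A' (extShapes φ m b) x := by
  refine ⟨fun b => bif b then evalN (extGraph G t) (extNlab nlab m) (fun _ => B) (s0Con φ m)
    else B, rfl, ?_, ?_⟩
  · rintro (_ | _) x
    exacts [hT x, evalN_mem (fun _ => hT) _ _]
  · rintro (_ | _) x
    · rw [extShapes, if_neg Bool.false_ne_true]
      exact (hfix x).trans (evalN_extCon_congr (by rfl) φ x)
    · rw [extShapes, if_pos rfl]
      exact evalN_s0Con_congr (by rfl) φ x

end Reduction

/-- the single-target reduction preserves validity for node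
targets.  G conforms to the single shape s = ⟨(), φ, targets t₁ … t_m⟩ (i.e.
some strictly faithful three-valued assignment assigns s to all targets) iff
the extended graph G' conforms to {s with target ⊥, s₀} where s₀'s only target
is the fresh node `none`. -/
theorem single_target_reduction {Node Edge Lab : Type*}
    (G : PGraph Node Edge Lab) (nlab : Node → Set Lab)
    (φ : NCq Unit Lab Node) (m : ℕ) (t : Fin m → Node) :
    (∃ A : Unit → Node → ℚ,
      (∀ u n, A u n ∈ ({0, 1/2, 1} : Set ℚ)) ∧
      (∀ u n, A u n = evalN G nlab A φ n) ∧
      (∀ j : Fin m, A () (t j) = 1)) ↔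
    (∃ A' : Bool → Option Node → ℚ,
      (∀ b x, A' b x ∈ ({0, 1/2, 1} : Set ℚ)) ∧
      (∀ b x, A' b x = evalN (extGraph G t) (extNlab nlab m) A' (extShapes φ m b) x) ∧
      A' true none = 1) := by
  constructor
  · rintro ⟨A, hT, hfix, htgt⟩
    obtain ⟨B, hBT, hBfix, hBA⟩ := exists_extCon_fixpoint (G := G) (t := t) hT hfix
    obtain ⟨A', hA'B, hA'T, hA'fix⟩ := exists_extShapes_fixpoint hBT hBfix
    refine ⟨A', hA'T, hA'fix, (hA'fix true none).trans ?_⟩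
    refine (evalN_s0Con_none_eq_one_iff hA'T φ).2 fun j => ?_
    simp only [hA'B, hBA, ← hfix (), htgt]
  · rintro ⟨A', hT, hfix, htgt⟩
    have hfix_some : ∀ n, A' false (some n) = evalN G nlab (fun _ n => A' false (some n)) φ n :=
      fun n => (hfix false (some n)).trans (evalN_extGraph_mapNCq_some _ _ φ n)
    refine ⟨fun _ n => A' false (some n), fun _ n => hT false (some n), fun _ => hfix_some,
      fun j => (hfix_some (t j)).trans ?_⟩
    exact (evalN_s0Con_none_eq_one_iff hT φ).1 ((hfix true none).symm.trans htgt) j
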